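/- Let k be a field, n ≥ 1, and let M be an indecomposable n-Kronecker module which is generated by bristles but is not itself a bristle. Then Hom(M, B) = 0 for every bristle B. -/

import Mathlib

/-!
A nonzero map `g : M → B(μ)` is nonzero on one of the generating bristles `B(λ_j)` of `M`; a
nonzero map between bristles is an isomorphism, so the image of `B(λ_j)` in `M` is a copy of
`B(μ)` on which `g` is bijective. Hence `M = B(λ_j) ⊕ ker g` as Kronecker modules, and
indecomposability forces `ker g = 0`, i.e. `M ≅ B(μ)`, which is excluded.
-/

open Function

variable (k : Type*) [Field k]

/-- Indecomposability of a representation `(M₁, M₂; α₁,…,α_n)` of the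
`n`-Kronecker quiver. -/
def KronIndec (n : ℕ) (M1 M2 : Type*) [AddCommGroup M1] [Module k M1]
    [AddCommGroup M2] [Module k M2] (α : Fin n → M1 →ₗ[k] M2) : Prop :=
  (Nontrivial M1 ∨ Nontrivial M2) ∧
    ∀ (U1 W1 : Submodule k M1) (U2 W2 : Submodule k M2),
      (∀ i, U1.map (α i) ≤ U2) → (∀ i, W1.map (α i) ≤ W2) →
      IsCompl U1 W1 → IsCompl U2 W2 →
      (U1 = ⊥ ∧ U2 = ⊥) ∨ (W1 = ⊥ ∧ W2 = ⊥)

/-- `M` is isomorphic to the bristle `B(λ) = (k,k;λ₁,…,λ_n)`. -/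
def IsoToBristle (n : ℕ) (M1 M2 : Type*) [AddCommGroup M1] [Module k M1]
    [AddCommGroup M2] [Module k M2] (α : Fin n → M1 →ₗ[k] M2)
    (lam : Fin n → k) : Prop :=
  ∃ (e1 : M1 ≃ₗ[k] k) (e2 : M2 ≃ₗ[k] k), ∀ i x, e2 (α i x) = lam i * e1 x

/-- `M` is generated by bristles: there is a surjective homomorphism onto `M`
from a finite direct sum `⊕_j B(λ_j)` of bristles. -/
def GenByBristles (n : ℕ) (M1 M2 : Type*) [AddCommGroup M1] [Module k M1]
    [AddCommGroup M2] [Module k M2] (α : Fin n → M1 →ₗ[k] M2) : Prop :=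
  ∃ (ι : Type) (_ : Fintype ι) (lam : ι → Fin n → k),
    (∀ j, lam j ≠ 0) ∧
    ∃ (f1 : (ι → k) →ₗ[k] M1) (f2 : (ι → k) →ₗ[k] M2),
      Surjective f1 ∧ Surjective f2 ∧
      ∀ i, (α i).comp f1 = f2.comp
        (LinearMap.pi fun j => lam j i • LinearMap.proj j)

open LinearMap

variable {k}

lemma isCompl_span_singleton_ker {M : Type*} [AddCommGroup M] [Module k M] {g : M →ₗ[k] k}
    {v : M} (hv : g v ≠ 0) : IsCompl (k ∙ v) (ker g) := by
  have hg : g ≠ 0 := fun h => hv (by simp [h])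
  exact (Submodule.isCompl_span_singleton_of_isCoatom_of_notMem
    (isCoatom_ker_of_surjective (surjective_of_ne_zero hg)) hv).symm

lemma bijective_of_ker_eq_bot_of_apply_ne_zero {M : Type*} [AddCommGroup M] [Module k M]
    {g : M →ₗ[k] k} {v : M} (hk : ker g = ⊥) (hv : g v ≠ 0) : Bijective g :=
  ⟨ker_eq_bot.mp hk, surjective_of_ne_zero fun h => hv (by simp [h])⟩

lemma exists_apply_single_ne_zero {ι M N : Type*} [Fintype ι] [DecidableEq ι]
    [AddCommGroup M] [Module k M] [AddCommGroup N] [Module k N]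
    {f : (ι → k) →ₗ[k] M} (hf : Surjective f) {g : M →ₗ[k] N} (hg : g ≠ 0) :
    ∃ j, g (f (Pi.single j 1)) ≠ 0 := by
  by_contra! h
  refine hg ((cancel_right hf).mp ((Pi.basisFun k ι).ext fun j => ?_))
  simpa using h j

/-- `h` says that `(a, b)` is a homomorphism `B(λ) → B(μ)` of bristles: it is zero or an
isomorphism. -/
lemma bristle_hom_eq_zero_iff {n : ℕ} {lam mu : Fin n → k} (hlam : lam ≠ 0) (hmu : mu ≠ 0)
    {a b : k} (h : ∀ i, lam i * b = mu i * a) : a = 0 ↔ b = 0 := by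
  obtain ⟨i, hi⟩ := Function.ne_iff.mp hlam
  obtain ⟨i', hi'⟩ := Function.ne_iff.mp hmu
  constructor
  · rintro rfl
    exact (mul_eq_zero.mp (by simpa using h i)).resolve_left hi
  · rintro rfl
    exact (mul_eq_zero.mp (by simpa using (h i').symm)).resolve_left hi'

section Kronecker

variable {n : ℕ} {M1 M2 : Type*} [AddCommGroup M1] [Module k M1] [AddCommGroup M2] [Module k M2]
  {α : Fin n → M1 →ₗ[k] M2}

lemma apply_single_of_comp_eq {ι : Type*} [DecidableEq ι] {lam : ι → Fin n → k}
    {f1 : (ι → k) →ₗ[k] M1} {f2 : (ι → k) →ₗ[k] M2}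
    (hcomm : ∀ i, (α i).comp f1 = f2.comp (LinearMap.pi fun j => lam j i • proj j))
    (i : Fin n) (j : ι) : α i (f1 (Pi.single j 1)) = lam j i • f2 (Pi.single j 1) := by
  have hdiag : (LinearMap.pi fun j' => lam j' i • proj j' : (ι → k) →ₗ[k] ι → k)
      (Pi.single j 1) = lam j i • Pi.single j 1 := by
    ext j'
    by_cases h : j' = j <;> simp [h]
  rw [← LinearMap.comp_apply, hcomm, LinearMap.comp_apply, hdiag, map_smul]

/-- `M = ⟨v1, v2⟩ ⊕ ker g` as Kronecker modules, so indecomposability leaves `ker g = 0`. -/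
theorem KronIndec.isoToBristle_of_apply_ne_zero (hind : KronIndec k n M1 M2 α)
    {mu : Fin n → k} {g1 : M1 →ₗ[k] k} {g2 : M2 →ₗ[k] k} (hg : ∀ i x, g2 (α i x) = mu i * g1 x)
    {v1 : M1} {v2 : M2} (hv : ∀ i, α i v1 ∈ k ∙ v2) (h1 : g1 v1 ≠ 0) (h2 : g2 v2 ≠ 0) :
    IsoToBristle k n M1 M2 α mu := by
  have hspan : ∀ i, (k ∙ v1).map (α i) ≤ k ∙ v2 := fun i => by
    rw [Submodule.map_span_le]
    simpa using hv i
  have hker : ∀ i, (ker g1).map (α i) ≤ ker g2 := fun i => by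
    rintro _ ⟨x, hx, rfl⟩
    simp_all [mem_ker]
  obtain ⟨hv1, -⟩ | ⟨hk1, hk2⟩ := hind.2 _ _ _ _ hspan hker
    (isCompl_span_singleton_ker h1) (isCompl_span_singleton_ker h2)
  · have hv1 : v1 = 0 := by simpa [hv1] using Submodule.mem_span_singleton_self (R := k) v1
    exact absurd (by simp [hv1]) h1
  · exact ⟨.ofBijective g1 (bijective_of_ker_eq_bot_of_apply_ne_zero hk1 h1),
      .ofBijective g2 (bijective_of_ker_eq_bot_of_apply_ne_zero hk2 h2), hg⟩

end Kronecker

theorem hom_to_bristle_eq_zero_general (n : ℕ)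
    (M1 M2 : Type*) [AddCommGroup M1] [Module k M1] [AddCommGroup M2] [Module k M2]
    (α : Fin n → M1 →ₗ[k] M2)
    (hind : KronIndec k n M1 M2 α)
    (hgen : GenByBristles k n M1 M2 α)
    (hnb : ∀ lam : Fin n → k, lam ≠ 0 → ¬ IsoToBristle k n M1 M2 α lam) :
    ∀ mu : Fin n → k, mu ≠ 0 →
      ∀ (g1 : M1 →ₗ[k] k) (g2 : M2 →ₗ[k] k),
        (∀ i x, g2 (α i x) = mu i * g1 x) → g1 = 0 ∧ g2 = 0 := by
  classical
  intro mu hmu g1 g2 hg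
  obtain ⟨ι, _, lam, hlam, f1, f2, hf1, hf2, hcomm⟩ := hgen
  by_contra hne
  obtain ⟨j, hj⟩ : ∃ j, g1 (f1 (Pi.single j 1)) ≠ 0 ∨ g2 (f2 (Pi.single j 1)) ≠ 0 := by
    rcases not_and_or.mp hne with h | h
    · exact (exists_apply_single_ne_zero hf1 h).imp fun _ => .inl
    · exact (exists_apply_single_ne_zero hf2 h).imp fun _ => .inr
  have hgen_apply := apply_single_of_comp_eq hcomm
  have hiff := bristle_hom_eq_zero_iff (hlam j) hmu fun i => by
    rw [← smul_eq_mul, ← map_smul g2, ← hgen_apply i j, hg]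
  obtain ⟨h1, h2⟩ : g1 (f1 (Pi.single j 1)) ≠ 0 ∧ g2 (f2 (Pi.single j 1)) ≠ 0 :=
    hj.elim (fun h => ⟨h, hiff.not.mp h⟩) fun h => ⟨hiff.not.mpr h, h⟩
  exact hnb mu hmu (hind.isoToBristle_of_apply_ne_zero hg
    (fun i => Submodule.mem_span_singleton.mpr ⟨lam j i, (hgen_apply i j).symm⟩) h1 h2)

/-- If `M` is an indecomposable `n`-Kronecker module which is generated by
bristles but is not itself a bristle, then `Hom(M, B) = 0` for every bristle
`B = B(μ)`. -/
theorem hom_to_bristle_eq_zero (n : ℕ) (hn : 1 ≤ n)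
    (M1 M2 : Type*) [AddCommGroup M1] [Module k M1] [AddCommGroup M2] [Module k M2]
    [FiniteDimensional k M1] [FiniteDimensional k M2]
    (α : Fin n → M1 →ₗ[k] M2)
    (hind : KronIndec k n M1 M2 α)
    (hgen : GenByBristles k n M1 M2 α)
    (hnb : ∀ lam : Fin n → k, lam ≠ 0 → ¬ IsoToBristle k n M1 M2 α lam) :
    ∀ mu : Fin n → k, mu ≠ 0 →
      ∀ (g1 : M1 →ₗ[k] k) (g2 : M2 →ₗ[k] k),
        (∀ i x, g2 (α i x) = mu i * g1 x) → g1 = 0 ∧ g2 = 0 :=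
  hom_to_bristle_eq_zero_general n M1 M2 α hind hgen hnb
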